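/- arXiv:2102.10018 — 2 statements merged into one kernel-verified Lean document; each statement's English description precedes it below -/
import Mathlib

section
/- Let P ⊂ ℝ^d be a finite configuration, A ⊆ Q(0,R) a measurable set avoiding P (containing no congruent copy of P), and let A' = A + (R + diam P)·ℤ^d be its periodization. Then A' also avoids P, and A' has well-defined density d(A') = vol(A)/(R + diam P)^d. -/
open MeasureTheory Filter

noncomputable section

/-- Borel σ-algebra on real matrices. -/
instance matMeasurableSpace {d : ℕ} : MeasurableSpace (Matrix (Fin d) (Fin d) ℝ) := borel _

/-- The action of an orthogonal matrix on Euclidean space. -/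
def act {d : ℕ} (T : Matrix.orthogonalGroup (Fin d) ℝ)
    (v : EuclideanSpace ℝ (Fin d)) : EuclideanSpace ℝ (Fin d) :=
  (EuclideanSpace.equiv (Fin d) ℝ).symm
    ((T : Matrix (Fin d) (Fin d) ℝ).mulVec (EuclideanSpace.equiv (Fin d) ℝ v))

/-- Open axis-parallel cube of side length `R` centered at `x`. -/
def cube {d : ℕ} (x : EuclideanSpace ℝ (Fin d)) (R : ℝ) : Set (EuclideanSpace ℝ (Fin d)) :=
  {y | ∀ j, |y j - x j| < R / 2}

/-- `A` contains a congruent copy of the configuration `P`. -/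
def hasCopy {d : ℕ} (A P : Set (EuclideanSpace ℝ (Fin d))) : Prop :=
  ∃ (x : EuclideanSpace ℝ (Fin d)) (T : Matrix.orthogonalGroup (Fin d) ℝ),
    (fun p => x + act T p) '' P ⊆ A

/-- The upper density of a set `A ⊆ ℝ^d`. -/
def upperDensity {d : ℕ} (A : Set (EuclideanSpace ℝ (Fin d))) : ℝ :=
  limsup (fun T : ℝ =>
    (volume (A ∩ {y : EuclideanSpace ℝ (Fin d) | ∀ j, |y j| ≤ T})).toReal / (2 * T) ^ d) atTop

/-- Independence density of the configuration `P` in `ℝ^d`. -/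
def mRd {d : ℕ} (P : Set (EuclideanSpace ℝ (Fin d))) : ℝ :=
  sSup (upperDensity '' {A | MeasurableSet A ∧ ¬ hasCopy A P})

/-- Independence density of `P` relative to the cube `Q(0,R)`. -/
def mQcube {d : ℕ} (R : ℝ) (P : Set (EuclideanSpace ℝ (Fin d))) : ℝ :=
  sSup ((fun A => (volume A).toReal / R ^ d) ''
    {A | A ⊆ cube 0 R ∧ MeasurableSet A ∧ ¬ hasCopy A P})

/-! Put `L = R + diam P`. Points of distinct translates `A + Lz`, `A + Lw` differ by more
than `L - R = diam P` in a coordinate where `z` and `w` differ, so a copy of `P` in the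
periodization lies in one translate of `A` and can be moved back into `A`. The translates are
disjoint, and `[-T, T]^d` contains every translate with `|z_j| ≤ (T - R/2)/L` and meets only
those with `|z_j| ≤ (T + R/2)/L`; both counts are `(2T/L)^d (1 + o(1))`. -/

open Metric Finset Topology

variable {d : ℕ}

theorem dist_act (T : Matrix.orthogonalGroup (Fin d) ℝ) (u v : EuclideanSpace ℝ (Fin d)) :
    dist (act T u) (act T v) = dist u v := by
  have hT := Unitary.map_mem (Matrix.toEuclideanCLM (n := Fin d) (𝕜 := ℝ)) T.2
  rw [dist_eq_norm, dist_eq_norm, ← ContinuousLinearMap.norm_map_of_mem_unitary hT (u - v),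
    map_sub]
  rfl

def latticeVec (L : ℝ) (z : Fin d → ℤ) : EuclideanSpace ℝ (Fin d) :=
  (EuclideanSpace.equiv (Fin d) ℝ).symm fun j => L * z j

@[simp]
theorem add_latticeVec_apply (a : EuclideanSpace ℝ (Fin d)) (L : ℝ) (z : Fin d → ℤ) (j : Fin d) :
    (a + latticeVec L z) j = a j + L * z j :=
  rfl

def periodization (L : ℝ) (A : Set (EuclideanSpace ℝ (Fin d))) :
    Set (EuclideanSpace ℝ (Fin d)) :=
  {y | ∃ a ∈ A, ∃ z : Fin d → ℤ, y = a + latticeVec L z}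

-- `[-T, T]^d`: half-side `T`, whereas `cube 0 R` has side `R`.
def closedCube (T : ℝ) : Set (EuclideanSpace ℝ (Fin d)) :=
  {y | ∀ j, |y j| ≤ T}

theorem sub_lt_abs_add_mul_sub_add_mul {R L s t : ℝ} {m n : ℤ} (hs : |s| < R / 2)
    (ht : |t| < R / 2) (hRL : R ≤ L) (hmn : m ≠ n) :
    L - R < |s + L * m - (t + L * n)| := by
  have hL : 0 ≤ L := by linarith [abs_nonneg s]
  have hLmn : L ≤ |L * (m - n : ℤ)| := by
    rw [abs_mul, abs_of_nonneg hL]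
    exact le_mul_of_one_le_right hL (by exact_mod_cast Int.one_le_abs (sub_ne_zero.mpr hmn))
  have hst : |s - t| < R := (abs_sub s t).trans_lt (by linarith)
  have htri : |L * (m - n : ℤ)| ≤ |s + L * m - (t + L * n)| + |s - t| :=
    calc |L * (m - n : ℤ)| = |(s + L * m - (t + L * n)) - (s - t)| := by push_cast; ring_nf
      _ ≤ _ := abs_sub _ _
  linarith

theorem abs_lt_of_mem_cube {R : ℝ} {a : EuclideanSpace ℝ (Fin d)} (ha : a ∈ cube 0 R)
    (j : Fin d) : |a j| < R / 2 := by
  simpa using ha j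

theorem sub_lt_dist_add_latticeVec {R L : ℝ} {a b : EuclideanSpace ℝ (Fin d)}
    (ha : a ∈ cube 0 R) (hb : b ∈ cube 0 R) (hRL : R ≤ L) {z w : Fin d → ℤ} (hzw : z ≠ w) :
    L - R < dist (a + latticeVec L z) (b + latticeVec L w) := by
  obtain ⟨j, hj⟩ := Function.ne_iff.mp hzw
  calc L - R < |(a + latticeVec L z) j - (b + latticeVec L w) j| := by
        rw [add_latticeVec_apply, add_latticeVec_apply]
        exact sub_lt_abs_add_mul_sub_add_mul (abs_lt_of_mem_cube ha j)
          (abs_lt_of_mem_cube hb j) hRL hj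
    _ ≤ dist (a + latticeVec L z) (b + latticeVec L w) := by
        rw [← Real.dist_eq]
        exact PiLp.dist_apply_le _ _ j

theorem not_hasCopy_periodization {P A : Set (EuclideanSpace ℝ (Fin d))} {R L : ℝ}
    (hP : Bornology.IsBounded P) (hPne : P.Nonempty) (hAQ : A ⊆ cube 0 R)
    (hRL : R + diam P ≤ L) (hav : ¬ hasCopy A P) : ¬ hasCopy (periodization L A) P := by
  rintro ⟨x, T, hsub⟩
  obtain ⟨p₀, hp₀⟩ := hPne
  obtain ⟨a₀, ha₀, z₀, hz₀ : x + act T p₀ = a₀ + latticeVec L z₀⟩ := hsub ⟨p₀, hp₀, rfl⟩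
  refine hav ⟨x - latticeVec L z₀, T, ?_⟩
  rintro _ ⟨p, hp, rfl⟩
  obtain ⟨a, ha, z, hz : x + act T p = a + latticeVec L z⟩ := hsub ⟨p, hp, rfl⟩
  have hzz₀ : z = z₀ := by
    by_contra hne
    have hfar := sub_lt_dist_add_latticeVec (hAQ ha) (hAQ ha₀)
      (by linarith [diam_nonneg (s := P)]) hne
    have hnear : dist (x + act T p) (x + act T p₀) ≤ diam P := by
      rw [dist_add_left, dist_act]
      exact dist_le_diam_of_mem hP hp hp₀
    rw [hz, hz₀] at hnear
    linarith
  have : x - latticeVec L z₀ + act T p = a := by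
    rw [sub_add_eq_add_sub, hz, hzz₀, add_sub_cancel_right]
  simpa [this] using ha

theorem isCompact_closedCube (T : ℝ) :
    IsCompact (closedCube T : Set (EuclideanSpace ℝ (Fin d))) := by
  have : (closedCube T : Set (EuclideanSpace ℝ (Fin d))) =
      EuclideanSpace.equiv (Fin d) ℝ ⁻¹' Set.Icc (fun _ => -T) fun _ => T := by
    ext y
    simp [closedCube, abs_le, Pi.le_def, forall_and]
  rw [this]
  exact (EuclideanSpace.equiv (Fin d) ℝ).toHomeomorph.isCompact_preimage.2 isCompact_Icc

theorem volume_inter_closedCube_ne_top (S : Set (EuclideanSpace ℝ (Fin d))) (T : ℝ) :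
    volume (S ∩ closedCube T) ≠ ⊤ :=
  ((isCompact_closedCube T).measure_lt_top.trans_le' (measure_mono Set.inter_subset_right)).ne

theorem volume_ne_top_of_subset_cube {R : ℝ} {A : Set (EuclideanSpace ℝ (Fin d))}
    (hAQ : A ⊆ cube 0 R) : volume A ≠ ⊤ := by
  have hA : A ∩ closedCube (R / 2) = A :=
    Set.inter_eq_left.2 fun a ha j => (abs_lt_of_mem_cube (hAQ ha) j).le
  simpa [hA] using volume_inter_closedCube_ne_top A (R / 2)

theorem volume_biUnion_translate {R L : ℝ} {A : Set (EuclideanSpace ℝ (Fin d))}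
    (hAQ : A ⊆ cube 0 R) (hA : MeasurableSet A) (hRL : R ≤ L) (S : Finset (Fin d → ℤ)) :
    volume (⋃ z ∈ S, (· + latticeVec L z) '' A) = #S * volume A := by
  have hdisj : Set.PairwiseDisjoint ↑S fun z => (· + latticeVec L z) '' A := by
    rintro z - w - hzw
    refine Set.disjoint_left.2 ?_
    rintro _ ⟨a, ha, rfl⟩ ⟨b, hb, hba : b + latticeVec L w = a + latticeVec L z⟩
    have := sub_lt_dist_add_latticeVec (hAQ ha) (hAQ hb) hRL hzw
    rw [← hba, dist_self] at this
    linarith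
  rw [measure_biUnion_finset hdisj fun z _ => ?_]
  · simp only [Set.image_add_right, measure_preimage_add_right, sum_const, nsmul_eq_mul]
  · rw [Set.image_add_right]
    exact measurable_add_const _ hA

def intCube (m : ℕ) : Finset (Fin d → ℤ) :=
  Fintype.piFinset fun _ => Icc (-(m : ℤ)) m

theorem mem_intCube {m : ℕ} {z : Fin d → ℤ} : z ∈ intCube m ↔ ∀ j, |z j| ≤ m := by
  simp [intCube, abs_le]

theorem card_intCube (m : ℕ) : #(intCube (d := d) m) = (2 * m + 1) ^ d := by
  have : #(Icc (-(m : ℤ)) m) = 2 * m + 1 := by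
    rw [Int.card_Icc]
    omega
  simp [intCube, this]

theorem abs_add_mul_le {R L T s : ℝ} {k : ℤ} {m : ℕ} (hs : |s| < R / 2) (hL : 0 ≤ L)
    (hk : |k| ≤ m) (hT : L * m + R / 2 ≤ T) : |s + L * k| ≤ T := by
  have : L * |(k : ℝ)| ≤ L * m := mul_le_mul_of_nonneg_left (by exact_mod_cast hk) hL
  calc |s + L * k| ≤ |s| + |L * k| := abs_add_le _ _
    _ ≤ T := by rw [abs_mul, abs_of_nonneg hL]; linarith

theorem abs_le_of_abs_add_mul_le {R L T s : ℝ} {k : ℤ} {m : ℕ} (hs : |s| < R / 2) (hL : 0 < L)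
    (h : |s + L * k| ≤ T) (hT : T + R / 2 ≤ L * m) : |k| ≤ m := by
  have : L * |(k : ℝ)| ≤ L * m :=
    calc L * |(k : ℝ)| = |(s + L * k) - s| := by rw [add_sub_cancel_left, abs_mul, abs_of_pos hL]
      _ ≤ |s + L * k| + |s| := abs_sub _ _
      _ ≤ L * m := by linarith
  exact_mod_cast le_of_mul_le_mul_left this hL

section Density

variable {R L : ℝ} {A : Set (EuclideanSpace ℝ (Fin d))}

theorem le_volume_periodization_inter_closedCube (hR : 0 < R) (hRL : R ≤ L)
    (hAQ : A ⊆ cube 0 R) (hA : MeasurableSet A) {m : ℕ} {T : ℝ} (hT : L * m + R / 2 ≤ T) :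
    ((2 * m + 1) ^ d : ℕ) * volume A ≤ volume (periodization L A ∩ closedCube T) := by
  rw [← card_intCube, ← volume_biUnion_translate hAQ hA hRL]
  refine measure_mono (Set.iUnion₂_subset fun z hz => ?_)
  rintro _ ⟨a, ha, rfl⟩
  refine ⟨⟨a, ha, z, rfl⟩, fun j => ?_⟩
  rw [add_latticeVec_apply]
  exact abs_add_mul_le (abs_lt_of_mem_cube (hAQ ha) j) (by linarith) (mem_intCube.1 hz j) hT

theorem volume_periodization_inter_closedCube_le (hR : 0 < R) (hRL : R ≤ L)
    (hAQ : A ⊆ cube 0 R) (hA : MeasurableSet A) {m : ℕ} {T : ℝ} (hT : T + R / 2 ≤ L * m) :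
    volume (periodization L A ∩ closedCube T) ≤ ((2 * m + 1) ^ d : ℕ) * volume A := by
  rw [← card_intCube, ← volume_biUnion_translate hAQ hA hRL]
  refine measure_mono ?_
  rintro _ ⟨⟨a, ha, z, rfl⟩, hT'⟩
  refine Set.mem_biUnion (mem_intCube.2 fun j => ?_) ⟨a, ha, rfl⟩
  have hj := hT' j
  rw [add_latticeVec_apply] at hj
  exact abs_le_of_abs_add_mul_le (abs_lt_of_mem_cube (hAQ ha) j) (by linarith) hj hT

theorem sub_div_pow_mul_le_volume_periodization_inter_closedCube (hR : 0 < R) (hRL : R ≤ L)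
    (hAQ : A ⊆ cube 0 R) (hA : MeasurableSet A) {T : ℝ} (hT : R / 2 + L ≤ T) :
    ((2 * T - (R + L)) / L) ^ d * (volume A).toReal ≤
      (volume (periodization L A ∩ closedCube T)).toReal := by
  have hL : 0 < L := hR.trans_le hRL
  set m := ⌊(T - R / 2) / L⌋₊
  have hx : 0 ≤ (T - R / 2) / L := div_nonneg (by linarith) hL.le
  have hmT : L * m + R / 2 ≤ T := by
    have := Nat.floor_le hx
    rw [le_div_iff₀ hL] at this
    linarith
  have hm : (2 * T - (R + L)) / L ≤ 2 * m + 1 := by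
    have := Nat.sub_one_lt_floor ((T - R / 2) / L)
    rw [sub_lt_iff_lt_add, div_lt_iff₀ hL] at this
    rw [div_le_iff₀ hL]
    linarith
  calc ((2 * T - (R + L)) / L) ^ d * (volume A).toReal
      ≤ (2 * m + 1) ^ d * (volume A).toReal := by
        gcongr
        exact div_nonneg (by linarith) hL.le
    _ = (((2 * m + 1) ^ d : ℕ) * volume A).toReal := by
        rw [ENNReal.toReal_mul, ENNReal.toReal_natCast]
        push_cast
        rfl
    _ ≤ _ := ENNReal.toReal_mono (volume_inter_closedCube_ne_top _ _)
        (le_volume_periodization_inter_closedCube hR hRL hAQ hA hmT)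

theorem volume_periodization_inter_closedCube_le_add_div_pow_mul (hR : 0 < R) (hRL : R ≤ L)
    (hAQ : A ⊆ cube 0 R) (hA : MeasurableSet A) {T : ℝ} (hT : 0 ≤ T) :
    (volume (periodization L A ∩ closedCube T)).toReal ≤
      ((2 * T + (R + 3 * L)) / L) ^ d * (volume A).toReal := by
  have hL : 0 < L := hR.trans_le hRL
  set m := ⌈(T + R / 2) / L⌉₊
  have hx : 0 ≤ (T + R / 2) / L := div_nonneg (by linarith) hL.le
  have hmT : T + R / 2 ≤ L * m := by
    have := Nat.le_ceil ((T + R / 2) / L)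
    rwa [div_le_iff₀' hL] at this
  have hm : 2 * m + 1 ≤ (2 * T + (R + 3 * L)) / L := by
    have := Nat.ceil_lt_add_one hx
    rw [← sub_lt_iff_lt_add, lt_div_iff₀ hL] at this
    rw [le_div_iff₀ hL]
    linarith
  calc (volume (periodization L A ∩ closedCube T)).toReal
      ≤ (((2 * m + 1) ^ d : ℕ) * volume A).toReal :=
        ENNReal.toReal_mono
          (ENNReal.mul_ne_top (ENNReal.natCast_ne_top _) (volume_ne_top_of_subset_cube hAQ))
          (volume_periodization_inter_closedCube_le hR hRL hAQ hA hmT)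
    _ = (2 * m + 1) ^ d * (volume A).toReal := by
        rw [ENNReal.toReal_mul, ENNReal.toReal_natCast]
        push_cast
        rfl
    _ ≤ _ := by gcongr

end Density

theorem tendsto_add_div_pow_mul_div_two_mul_pow (d : ℕ) {L : ℝ} (hL : L ≠ 0) (c v : ℝ) :
    Tendsto (fun T : ℝ => ((2 * T + c) / L) ^ d * v / (2 * T) ^ d) atTop (𝓝 (v / L ^ d)) := by
  have h : Tendsto (fun T : ℝ => (L⁻¹ + c / (2 * L) * T⁻¹) ^ d * v) atTop
      (𝓝 ((L⁻¹ + c / (2 * L) * 0) ^ d * v)) :=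
    ((tendsto_const_nhds.add (tendsto_inv_atTop_zero.const_mul _)).pow d).mul_const v
  rw [mul_zero, add_zero, inv_pow, inv_mul_eq_div] at h
  refine h.congr' ?_
  filter_upwards [eventually_gt_atTop 0] with T hT
  rw [mul_div_right_comm, ← div_pow]
  congr 2
  field_simp

theorem tendsto_volume_periodization_inter_closedCube_div {R L : ℝ}
    {A : Set (EuclideanSpace ℝ (Fin d))} (hR : 0 < R) (hRL : R ≤ L) (hAQ : A ⊆ cube 0 R)
    (hA : MeasurableSet A) :
    Tendsto (fun T : ℝ => (volume (periodization L A ∩ closedCube T)).toReal / (2 * T) ^ d)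
      atTop (𝓝 ((volume A).toReal / L ^ d)) := by
  have hL : L ≠ 0 := (hR.trans_le hRL).ne'
  refine tendsto_of_tendsto_of_tendsto_of_le_of_le'
    (tendsto_add_div_pow_mul_div_two_mul_pow d hL (-(R + L)) _)
    (tendsto_add_div_pow_mul_div_two_mul_pow d hL (R + 3 * L) _) ?_ ?_
  · filter_upwards [eventually_ge_atTop (R / 2 + L)] with T hT
    refine div_le_div_of_nonneg_right ?_ (pow_nonneg (by linarith) _)
    simpa only [← sub_eq_add_neg] using
      sub_div_pow_mul_le_volume_periodization_inter_closedCube hR hRL hAQ hA hT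
  · filter_upwards [eventually_ge_atTop 0] with T hT
    refine div_le_div_of_nonneg_right ?_ (by positivity)
    exact volume_periodization_inter_closedCube_le_add_div_pow_mul hR hRL hAQ hA hT

theorem stmt_3_general {d : ℕ} (P : Set (EuclideanSpace ℝ (Fin d)))
    (hPfin : P.Finite) (hPne : P.Nonempty) (R : ℝ) (hR : 0 < R)
    (A : Set (EuclideanSpace ℝ (Fin d))) (hAQ : A ⊆ cube 0 R) (hA : MeasurableSet A)
    (hav : ¬ hasCopy A P)
    (A' : Set (EuclideanSpace ℝ (Fin d)))
    (hA' : A' = {y | ∃ a ∈ A, ∃ z : Fin d → ℤ,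
        y = a + (EuclideanSpace.equiv (Fin d) ℝ).symm
          (fun j => (R + Metric.diam P) * (z j : ℝ))}) :
    ¬ hasCopy A' P ∧
      Tendsto (fun T : ℝ =>
          (volume (A' ∩ {y : EuclideanSpace ℝ (Fin d) | ∀ j, |y j| ≤ T})).toReal / (2 * T) ^ d)
        atTop (nhds ((volume A).toReal / (R + Metric.diam P) ^ d)) := by
  subst hA'
  exact ⟨not_hasCopy_periodization hPfin.isBounded hPne hAQ le_rfl hav,
    tendsto_volume_periodization_inter_closedCube_div hR
      (le_add_of_nonneg_right diam_nonneg) hAQ hA⟩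

/-- the periodization of a `P`-avoiding subset of a cube avoids `P` and has a
well-defined density `vol(A)/(R + diam P)^d`. -/
theorem stmt_3 {d : ℕ} (hd : 0 < d) (P : Set (EuclideanSpace ℝ (Fin d)))
    (hPfin : P.Finite) (hPne : P.Nonempty) (R : ℝ) (hR : 0 < R)
    (A : Set (EuclideanSpace ℝ (Fin d))) (hAQ : A ⊆ cube 0 R) (hA : MeasurableSet A)
    (hav : ¬ hasCopy A P)
    (A' : Set (EuclideanSpace ℝ (Fin d)))
    (hA' : A' = {y | ∃ a ∈ A, ∃ z : Fin d → ℤ,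
        y = a + (EuclideanSpace.equiv (Fin d) ℝ).symm
          (fun j => (R + Metric.diam P) * (z j : ℝ))}) :
    ¬ hasCopy A' P ∧
      Tendsto (fun T : ℝ =>
          (volume (A' ∩ {y : EuclideanSpace ℝ (Fin d) | ∀ j, |y j| ≤ T})).toReal / (2 * T) ^ d)
        atTop (nhds ((volume A).toReal / (R + Metric.diam P) ^ d)) :=
  stmt_3_general P hPfin hPne R hR A hAQ hA hav A' hA'
end
end

section
/- For all configurations P₁, …, P_n ⊂ ℝ^d (finite point sets), the independence density is supermultiplicative: m_{ℝ^d}(P₁, …, P_n) ≥ ∏_{i=1}^n m_{ℝ^d}(P_i), where m_{ℝ^d}(P₁,…,P_n) is the supremum of upper densities of measurable sets in ℝ^d containing no congruent copy of any of the P_i. -/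
/-! If `A` avoids the configurations of a family `F` and `B` avoids `Q`, then by Fubini the
translates `A ∩ (B + t)`, `t` ranging over a large box, meet a box of radius `T` in measure
`≈ dens A · dens B · (2T)^d` on average. Along radii `r₀ < r₁ < …` growing so fast that the box of
radius `r_k + diam Q` is negligible in the box of radius `r_{k+1}`, keep from a good translate
`A ∩ (B + t_k)` only the shell between these two boxes. The union `C ⊆ A` of these shells still
avoids `F`, has upper density `≈ dens A · dens B`, and, the shells being more than `diam Q` apart,
every copy of `Q` in `C` lies in one shell, hence gives a copy of `Q` in `B`. So
`m(Q) · m(F) ≤ m(F ∪ {Q})`, and induction on the number of configurations finishes. -/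

open MeasureTheory Filter

noncomputable section

lemma exists_lt_of_lt_sSup_of_nonneg {s : Set ℝ} {x : ℝ} (hx : 0 ≤ x) (h : x < sSup s) :
    ∃ y ∈ s, x < y := by
  obtain rfl | hs := s.eq_empty_or_nonempty
  · exact absurd (Real.sSup_empty ▸ h) hx.not_gt
  · exact exists_lt_of_lt_csSup hs h

lemma eventually_mul_add_pow_le {β β' : ℝ} (h : β < β') (T : ℝ) (d : ℕ) :
    ∀ᶠ R in atTop, β * (T + R) ^ d ≤ β' * R ^ d := by
  have hlim : Tendsto (fun R => β * (T / R + 1) ^ d) atTop (nhds β) := by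
    simpa using ((tendsto_const_nhds.div_atTop tendsto_id).add_const 1).pow d |>.const_mul β
  filter_upwards [hlim.eventually (gt_mem_nhds h), eventually_gt_atTop 0] with R hR hR0
  have : β * (T + R) ^ d = β * (T / R + 1) ^ d * R ^ d := by
    rw [mul_assoc, ← mul_pow, add_mul, div_mul_cancel₀ _ hR0.ne', one_mul]
  rw [this]
  exact mul_le_mul_of_nonneg_right hR.le (by positivity)

section Box

variable {d : ℕ}

def box (d : ℕ) (T : ℝ) : Set (EuclideanSpace ℝ (Fin d)) := {y | ∀ j, |y j| ≤ T}

lemma measurableSet_box (T : ℝ) : MeasurableSet (box d T) := by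
  simp only [box, Set.ofPred_forall]
  exact .iInter fun j => measurableSet_le (by fun_prop) measurable_const

lemma box_mono {T S : ℝ} (h : T ≤ S) : box d T ⊆ box d S :=
  fun _ hy j => (hy j).trans h

lemma volume_box {T : ℝ} (hT : 0 ≤ T) : volume (box d T) = ENNReal.ofReal ((2 * T) ^ d) := by
  have : box d T =
      (MeasurableEquiv.toLp 2 (Fin d → ℝ)).symm ⁻¹' Set.univ.pi fun _ => Set.Icc (-T) T := by
    ext y
    simp only [box, Set.mem_ofPred_eq, Set.mem_preimage, Set.mem_univ_pi, Set.mem_Icc, abs_le]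
    rfl
  rw [this, (EuclideanSpace.volume_preserving_symm_measurableEquiv_toLp (Fin d)).measure_preimage
    (MeasurableSet.univ_pi fun _ => measurableSet_Icc).nullMeasurableSet, volume_pi_pi]
  simp [Real.volume_Icc, ← ENNReal.ofReal_pow (by positivity : (0 : ℝ) ≤ T + T), two_mul]

open Pointwise in
lemma box_sub_box (T R : ℝ) : box d T - box d R ⊆ box d (T + R) := by
  rintro _ ⟨a, ha, b, hb, rfl⟩ j
  simpa using (abs_sub (a j) (b j)).trans (add_le_add (ha j) (hb j))

lemma volume_box_ne_top (T : ℝ) : volume (box d T) ≠ ⊤ :=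
  measure_ne_top_of_subset (box_mono (le_abs_self T))
    (by rw [volume_box (abs_nonneg T)]; exact ENNReal.ofReal_ne_top)

end Box

section UpperDensity

variable {d : ℕ}

def boxDensity (A : Set (EuclideanSpace ℝ (Fin d))) (T : ℝ) : ℝ :=
  volume.real (A ∩ box d T) / (2 * T) ^ d

lemma upperDensity_eq_limsup (A : Set (EuclideanSpace ℝ (Fin d))) :
    upperDensity A = limsup (boxDensity A) atTop := rfl

lemma measureReal_box {T : ℝ} (hT : 0 ≤ T) : volume.real (box d T) = (2 * T) ^ d := by
  rw [measureReal_def, volume_box hT, ENNReal.toReal_ofReal (by positivity)]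

lemma boxDensity_mem_Icc (A : Set (EuclideanSpace ℝ (Fin d))) {T : ℝ} (hT : 0 < T) :
    boxDensity A T ∈ Set.Icc 0 1 := by
  refine ⟨by unfold boxDensity; positivity, div_le_one_of_le₀ ?_ (by positivity)⟩
  rw [← measureReal_box hT.le]
  exact measureReal_mono Set.inter_subset_right (by simp [volume_box hT.le])

lemma boxDensity_univ {T : ℝ} (hT : 0 < T) :
    boxDensity (Set.univ : Set (EuclideanSpace ℝ (Fin d))) T = 1 := by
  rw [boxDensity, Set.univ_inter, measureReal_box hT.le, div_self (by positivity)]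

lemma isBoundedUnder_boxDensity (A : Set (EuclideanSpace ℝ (Fin d))) :
    IsBoundedUnder (· ≤ ·) atTop (boxDensity A) :=
  isBoundedUnder_of_eventually_le ((eventually_gt_atTop 0).mono fun _ hT =>
    (boxDensity_mem_Icc A hT).2)

lemma isCoboundedUnder_boxDensity (A : Set (EuclideanSpace ℝ (Fin d))) :
    IsCoboundedUnder (· ≤ ·) atTop (boxDensity A) :=
  (isBoundedUnder_of_eventually_ge ((eventually_gt_atTop 0).mono fun _ hT =>
    (boxDensity_mem_Icc A hT).1)).isCoboundedUnder_le

lemma le_upperDensity_of_frequently {A : Set (EuclideanSpace ℝ (Fin d))} {α : ℝ}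
    (h : ∃ᶠ T in atTop, α ≤ boxDensity A T) : α ≤ upperDensity A :=
  le_limsup_of_frequently_le h (isBoundedUnder_boxDensity A)

lemma frequently_lt_boxDensity {A : Set (EuclideanSpace ℝ (Fin d))} {α : ℝ}
    (h : α < upperDensity A) : ∃ᶠ T in atTop, α < boxDensity A T :=
  frequently_lt_of_lt_limsup (isCoboundedUnder_boxDensity A) h

lemma upperDensity_nonneg (A : Set (EuclideanSpace ℝ (Fin d))) : 0 ≤ upperDensity A :=
  le_upperDensity_of_frequently ((eventually_gt_atTop 0).mono fun _ hT =>
    (boxDensity_mem_Icc A hT).1).frequently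

lemma upperDensity_le_one (A : Set (EuclideanSpace ℝ (Fin d))) : upperDensity A ≤ 1 :=
  limsup_le_of_le (isCoboundedUnder_boxDensity A) ((eventually_gt_atTop 0).mono fun _ hT =>
    (boxDensity_mem_Icc A hT).2)

lemma upperDensity_univ : upperDensity (Set.univ : Set (EuclideanSpace ℝ (Fin d))) = 1 := by
  rw [upperDensity_eq_limsup, limsup_congr ((eventually_gt_atTop 0).mono fun _ => boxDensity_univ),
    limsup_const]

lemma mul_pow_le_measureReal_inter_box {A : Set (EuclideanSpace ℝ (Fin d))} {α T : ℝ} (hT : 0 < T)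
    (h : α ≤ boxDensity A T) : α * (2 * T) ^ d ≤ volume.real (A ∩ box d T) :=
  (le_div_iff₀ (by positivity)).mp h

end UpperDensity

section Congruence

open Matrix

variable {d : ℕ}

lemma norm_act (T : Matrix.orthogonalGroup (Fin d) ℝ) (v : EuclideanSpace ℝ (Fin d)) :
    ‖act T v‖ = ‖v‖ := by
  have hT := (mem_orthogonalGroup_iff' _ _).mp T.2
  rw [← sq_eq_sq₀ (norm_nonneg _) (norm_nonneg _), ← real_inner_self_eq_norm_sq,
    ← real_inner_self_eq_norm_sq, EuclideanSpace.inner_eq_star_dotProduct,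
    EuclideanSpace.inner_eq_star_dotProduct]
  simp only [act, star_trivial]
  change (T.1 *ᵥ v.ofLp) ⬝ᵥ (T.1 *ᵥ v.ofLp) = v.ofLp ⬝ᵥ v.ofLp
  rw [dotProduct_mulVec, ← mulVec_transpose, mulVec_mulVec, hT, one_mulVec]

lemma isometry_add_act (x : EuclideanSpace ℝ (Fin d)) (T : Matrix.orthogonalGroup (Fin d) ℝ) :
    Isometry fun p => x + act T p := by
  refine Isometry.of_dist_eq fun p q => ?_
  rw [dist_add_left, dist_eq_norm, dist_eq_norm, ← norm_act T (p - q)]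
  congr 1
  ext j
  simp [act, mulVec_sub]

end Congruence

section Copies

variable {d : ℕ}

lemma hasCopy_mono {A A' P : Set (EuclideanSpace ℝ (Fin d))} (h : A ⊆ A') :
    hasCopy A P → hasCopy A' P :=
  fun ⟨x, T, hP⟩ => ⟨x, T, hP.trans h⟩

lemma exists_subset_of_subset_iUnion_of_separated {X ι : Type*} [PseudoMetricSpace X]
    {S : ι → Set X} {D : ℝ} (hS : Pairwise fun k m => ∀ u ∈ S k, ∀ v ∈ S m, D < dist u v)
    {Y : Set X} (hY : Bornology.IsBounded Y) (hYD : Metric.diam Y ≤ D) (hYS : Y ⊆ ⋃ k, S k)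
    (hne : Y.Nonempty) : ∃ k, Y ⊆ S k := by
  obtain ⟨y₀, hy₀⟩ := hne
  obtain ⟨k, hk⟩ := Set.mem_iUnion.mp (hYS hy₀)
  refine ⟨k, fun y hy => ?_⟩
  obtain ⟨m, hm⟩ := Set.mem_iUnion.mp (hYS hy)
  obtain rfl | hmk := eq_or_ne m k
  · exact hm
  · exact absurd ((Metric.dist_le_diam_of_mem hY hy hy₀).trans hYD) (hS hmk y hm y₀ hk).not_ge

lemma hasCopy_of_hasCopy_iUnion {ι : Type*} {S : ι → Set (EuclideanSpace ℝ (Fin d))}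
    {B P : Set (EuclideanSpace ℝ (Fin d))} {D : ℝ} (τ : ι → EuclideanSpace ℝ (Fin d))
    (hSB : ∀ k, S k ⊆ (· - τ k) ⁻¹' B)
    (hS : Pairwise fun k m => ∀ u ∈ S k, ∀ v ∈ S m, D < dist u v)
    (hP : Bornology.IsBounded P) (hPD : Metric.diam P ≤ D) (h : hasCopy (⋃ k, S k) P) :
    hasCopy B P := by
  obtain ⟨x, T, hxT⟩ := h
  obtain rfl | hne := P.eq_empty_or_nonempty
  · exact ⟨0, 1, by simp⟩
  have hiso := isometry_add_act x T
  obtain ⟨k, hk⟩ := exists_subset_of_subset_iUnion_of_separated hS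
    (hiso.lipschitz.isBounded_image hP) (hiso.diam_image P ▸ hPD) hxT (hne.image _)
  refine ⟨x - τ k, T, ?_⟩
  rintro _ ⟨p, hp, rfl⟩
  simpa [sub_add_eq_add_sub] using hSB k (hk ⟨p, hp, rfl⟩)

end Copies

section Correlation

variable {G : Type*} [MeasurableSpace G] [AddCommGroup G] [MeasurableAdd₂ G] [MeasurableNeg G]
  {μ : Measure G} [SFinite μ] [μ.IsAddLeftInvariant] [μ.IsNegInvariant]

lemma lintegral_measure_inter_preimage_sub (A : Set G) {B : Set G} (hB : MeasurableSet B) :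
    ∫⁻ t, μ (A ∩ (· - t) ⁻¹' B) ∂μ = μ A * μ B := by
  have hmeas :
      Measurable (Function.uncurry fun t y : G => B.indicator 1 (y - t) : G × G → ENNReal) :=
    (measurable_one.indicator hB).comp (measurable_snd.sub measurable_fst)
  calc ∫⁻ t, μ (A ∩ (· - t) ⁻¹' B) ∂μ = ∫⁻ t, ∫⁻ y in A, B.indicator 1 (y - t) ∂μ ∂μ := by
        refine lintegral_congr fun t => ?_
        have hBt : MeasurableSet ((· - t) ⁻¹' B) := hB.preimage (measurable_sub_const t)
        rw [Set.inter_comm, ← Measure.restrict_apply hBt, ← lintegral_indicator_one hBt]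
        rfl
    _ = ∫⁻ y in A, ∫⁻ t, B.indicator 1 (y - t) ∂μ ∂μ := lintegral_lintegral_swap hmeas.aemeasurable
    _ = μ A * μ B := by
        simp_rw [lintegral_sub_left_eq_self (B.indicator 1), lintegral_indicator_one hB,
          setLIntegral_const, mul_comm]

open Pointwise in
lemma exists_measure_mul_le_measure_inter_preimage_sub {A B S : Set G} (hB : MeasurableSet B)
    (hS : MeasurableSet S) (hABS : A - B ⊆ S) (hAfin : μ A ≠ ⊤)
    (hBfin : μ B ≠ ⊤) (hS0 : μ S ≠ 0) (hSfin : μ S ≠ ⊤) :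
    ∃ t, μ A * μ B ≤ μ S * μ (A ∩ (· - t) ⁻¹' B) := by
  have hsupp : (fun t => μ (A ∩ (· - t) ⁻¹' B)).support ⊆ S := by
    intro t ht
    obtain ⟨y, hyA, hyB⟩ := nonempty_of_measure_ne_zero ht
    simpa [sub_sub_cancel] using hABS (Set.sub_mem_sub hyA hyB)
  have hint := lintegral_measure_inter_preimage_sub (μ := μ) A hB
  rw [← setLIntegral_eq_of_support_subset hsupp] at hint
  obtain ⟨t, -, ht⟩ := exists_setLAverage_le hS0 hS.nullMeasurableSet
    (hint ▸ ENNReal.mul_ne_top hAfin hBfin)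
  rw [setLAverage_eq, hint, ENNReal.div_le_iff_le_mul (.inl hS0) (.inl hSfin)] at ht
  exact ⟨t, ht.trans_eq (mul_comm _ _)⟩

end Correlation

lemma exists_translate_measureReal_inter_box {d : ℕ} (A : Set (EuclideanSpace ℝ (Fin d)))
    {B : Set (EuclideanSpace ℝ (Fin d))} (hB : MeasurableSet B) {T R : ℝ} (hT : 0 < T)
    (hR : 0 < R) : ∃ t, volume.real (A ∩ box d T) * volume.real (B ∩ box d R) ≤
      (2 * (T + R)) ^ d * volume.real (A ∩ (· - t) ⁻¹' B ∩ box d T) := by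
  obtain ⟨t, ht⟩ := exists_measure_mul_le_measure_inter_preimage_sub (μ := volume)
    (A := A ∩ box d T) (hB.inter (measurableSet_box R)) (measurableSet_box (T + R))
    ((Set.sub_subset_sub Set.inter_subset_right Set.inter_subset_right).trans (box_sub_box T R))
    (measure_inter_lt_top_of_right_ne_top (volume_box_ne_top T)).ne
    (measure_inter_lt_top_of_right_ne_top (volume_box_ne_top R)).ne
    (by rw [volume_box (by positivity), Ne, ENNReal.ofReal_eq_zero, not_le]; positivity)
    (volume_box_ne_top _)
  refine ⟨t, ?_⟩
  have := ENNReal.toReal_mono (ENNReal.mul_ne_top (volume_box_ne_top _)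
    (measure_ne_top_of_subset (fun y hy => hy.1.2) (volume_box_ne_top T))) ht
  rw [ENNReal.toReal_mul, ENNReal.toReal_mul, ← measureReal_def, ← measureReal_def,
    ← measureReal_def, ← measureReal_def, measureReal_box (by positivity)] at this
  refine this.trans (mul_le_mul_of_nonneg_left (measureReal_mono (fun y hy =>
    ⟨⟨hy.1.1, hy.2.1⟩, hy.1.2⟩) ?_) (by positivity))
  exact measure_ne_top_of_subset Set.inter_subset_right (volume_box_ne_top T)

lemma frequently_exists_le_boxDensity_inter_preimage_sub {d : ℕ}
    {A B : Set (EuclideanSpace ℝ (Fin d))} (hB : MeasurableSet B) {α β : ℝ} (hα : 0 ≤ α)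
    (hαA : α < upperDensity A) (hβB : β < upperDensity B) :
    ∃ᶠ T in atTop, ∃ t, α * β ≤ boxDensity (A ∩ (· - t) ⁻¹' B) T := by
  obtain ⟨β', hββ', hβ'B⟩ := exists_between hβB
  refine ((frequently_lt_boxDensity hαA).and_eventually (eventually_gt_atTop 0)).mono ?_
  rintro T ⟨hαT, hT⟩
  obtain ⟨R, hβ'R, hR, hgrowth⟩ := ((frequently_lt_boxDensity hβ'B).and_eventually
    ((eventually_gt_atTop 0).and ((tendsto_id.const_mul_atTop two_pos).eventually
      (eventually_mul_add_pow_le hββ' (2 * T) d)))).exists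
  obtain ⟨t, ht⟩ := exists_translate_measureReal_inter_box A hB hT hR
  refine ⟨t, ?_⟩
  have hA' := mul_pow_le_measureReal_inter_box hT hαT.le
  have hB' := mul_pow_le_measureReal_inter_box hR hβ'R.le
  simp only [id, ← mul_add] at hgrowth
  rw [boxDensity, le_div_iff₀ (by positivity)]
  refine le_of_mul_le_mul_left ?_ (by positivity : (0 : ℝ) < (2 * (T + R)) ^ d)
  have h2T : 0 ≤ α * (2 * T) ^ d := by positivity
  nlinarith [mul_le_mul_of_nonneg_left hgrowth h2T,
    measureReal_nonneg (s := B ∩ box d R) (μ := volume)]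

section Shells

variable {d : ℕ}

def shellUnion (A B : Set (EuclideanSpace ℝ (Fin d))) (r : ℕ → ℝ)
    (τ : ℕ → EuclideanSpace ℝ (Fin d)) (D : ℝ) : Set (EuclideanSpace ℝ (Fin d)) :=
  ⋃ k, A ∩ (· - τ k) ⁻¹' B ∩ (box d (r (k + 1)) \ box d (r k + D))

variable {A B : Set (EuclideanSpace ℝ (Fin d))} {r : ℕ → ℝ} {τ : ℕ → EuclideanSpace ℝ (Fin d)}
  {D : ℝ}

lemma shellUnion_subset : shellUnion A B r τ D ⊆ A :=
  Set.iUnion_subset fun _ _ hy => hy.1.1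

lemma measurableSet_shellUnion (hA : MeasurableSet A) (hB : MeasurableSet B) :
    MeasurableSet (shellUnion A B r τ D) :=
  .iUnion fun _ => (hA.inter (hB.preimage (measurable_sub_const _))).inter
    ((measurableSet_box _).diff (measurableSet_box _))

lemma lt_dist_of_mem_box_of_notMem_box {u v : EuclideanSpace ℝ (Fin d)} {T : ℝ}
    (hu : u ∈ box d T) (hv : v ∉ box d (T + D)) : D < dist u v := by
  obtain ⟨j, hj⟩ : ∃ j, T + D < |v j| := by simpa [box] using hv
  calc D < |v j| - |u j| := by linarith [hu j]
    _ ≤ |v j - u j| := abs_sub_abs_le_abs_sub _ _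
    _ ≤ dist v u := by simpa [dist_eq_norm] using PiLp.norm_apply_le (v - u) j
    _ = dist u v := dist_comm v u

lemma hasCopy_of_hasCopy_shellUnion (hr : Monotone r) {P : Set (EuclideanSpace ℝ (Fin d))}
    (hP : Bornology.IsBounded P) (hPD : Metric.diam P ≤ D)
    (h : hasCopy (shellUnion A B r τ D) P) : hasCopy B P := by
  have hsep : ∀ k m, k < m → ∀ u ∈ A ∩ (· - τ k) ⁻¹' B ∩ (box d (r (k + 1)) \ box d (r k + D)),
      ∀ v ∈ A ∩ (· - τ m) ⁻¹' B ∩ (box d (r (m + 1)) \ box d (r m + D)), D < dist u v :=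
    fun k m hkm u hu v hv => lt_dist_of_mem_box_of_notMem_box (box_mono (hr hkm) hu.2.1) hv.2.2
  refine hasCopy_of_hasCopy_iUnion τ (fun k y hy => hy.1.2) (fun k m hkm => ?_) hP hPD h
  rcases hkm.lt_or_gt with hlt | hgt
  · exact hsep k m hlt
  · exact fun u hu v hv => dist_comm v u ▸ hsep m k hgt v hv u hu

lemma le_boxDensity_shellUnion {γ ε : ℝ} {k : ℕ} (hrk : 0 ≤ r k) (hrk' : 0 < r (k + 1))
    (hD : 0 ≤ D) (hγ : γ ≤ boxDensity (A ∩ (· - τ k) ⁻¹' B) (r (k + 1)))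
    (hinner : (2 * (r k + D)) ^ d ≤ ε * (2 * r (k + 1)) ^ d) :
    γ - ε ≤ boxDensity (shellUnion A B r τ D) (r (k + 1)) := by
  have hshell : volume.real (A ∩ (· - τ k) ⁻¹' B ∩ box d (r (k + 1))) -
      volume.real (box d (r k + D)) ≤ volume.real (shellUnion A B r τ D ∩ box d (r (k + 1))) := by
    refine (le_measureReal_sdiff (volume_box_ne_top _)).trans (measureReal_mono ?_
      (measure_ne_top_of_subset Set.inter_subset_right (volume_box_ne_top _)))
    rintro y ⟨⟨hy, hyr⟩, hyD⟩
    exact ⟨Set.mem_iUnion.mpr ⟨k, hy, hyr, hyD⟩, hyr⟩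
  have hdense := mul_pow_le_measureReal_inter_box hrk' hγ
  rw [measureReal_box (by positivity)] at hshell
  rw [boxDensity, le_div_iff₀ (by positivity), sub_mul]
  linarith

lemma exists_subset_hasCopy_imp_le_upperDensity (hd : 0 < d)
    {A B : Set (EuclideanSpace ℝ (Fin d))} (hA : MeasurableSet A) (hB : MeasurableSet B)
    {γ ε D : ℝ} (hε : 0 < ε) (hD : 0 ≤ D)
    (hγ : ∃ᶠ T in atTop, ∃ t, γ ≤ boxDensity (A ∩ (· - t) ⁻¹' B) T) :
    ∃ C ⊆ A, MeasurableSet C ∧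
      (∀ P, Bornology.IsBounded P → Metric.diam P ≤ D → hasCopy C P → hasCopy B P) ∧
      γ - ε ≤ upperDensity C := by
  have hgrowth : Tendsto (fun T : ℝ => ε * (2 * T) ^ d) atTop atTop :=
    ((tendsto_pow_atTop hd.ne').comp (tendsto_id.const_mul_atTop two_pos)).const_mul_atTop hε
  have hstep : ∀ L, ∃ T, (∃ t, γ ≤ boxDensity (A ∩ (· - t) ⁻¹' B) T) ∧
      L + 1 ≤ T ∧ (2 * (L + D)) ^ d ≤ ε * (2 * T) ^ d := fun L =>
    (hγ.and_eventually ((eventually_ge_atTop (L + 1)).and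
      (hgrowth.eventually_ge_atTop _))).exists
  choose R hR using hstep
  choose τ hτ using fun L => (hR L).1
  set r : ℕ → ℝ := fun k => R^[k] 0
  have hr_succ (k : ℕ) : r (k + 1) = R (r k) := Function.iterate_succ_apply' R k 0
  have hr_nat (k : ℕ) : (k : ℝ) ≤ r k := by
    induction k with
    | zero => simp [r]
    | succ k ih => rw [hr_succ]; push_cast; linarith [(hR (r k)).2.1]
  have hr : Monotone r := monotone_nat_of_le_succ fun k => by
    rw [hr_succ]; linarith [(hR (r k)).2.1]
  refine ⟨shellUnion A B r (τ ∘ r) D, shellUnion_subset, measurableSet_shellUnion hA hB,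
    fun P hP hPD => hasCopy_of_hasCopy_shellUnion hr hP hPD, le_upperDensity_of_frequently ?_⟩
  have hr_tendsto : Tendsto (fun k => r (k + 1)) atTop atTop :=
    tendsto_atTop_mono (fun k => hr_nat (k + 1))
      (tendsto_natCast_atTop_atTop.comp (tendsto_add_atTop_nat 1))
  refine hr_tendsto.frequently (Frequently.of_forall fun k => ?_)
  have hRk := hR (r k)
  have hτk := hτ (r k)
  rw [← hr_succ] at hRk hτk
  exact le_boxDensity_shellUnion (k.cast_nonneg.trans (hr_nat k)) (by linarith [hr_nat k, hRk.2.1])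
    hD hτk hRk.2.2

end Shells

section AvoidDensity

variable {d : ℕ}

def avoidDensity (F : Set (Set (EuclideanSpace ℝ (Fin d)))) : ℝ :=
  sSup (upperDensity '' {A | MeasurableSet A ∧ ∀ P ∈ F, ¬ hasCopy A P})

lemma upperDensity_le_avoidDensity {F : Set (Set (EuclideanSpace ℝ (Fin d)))}
    {A : Set (EuclideanSpace ℝ (Fin d))} (hA : MeasurableSet A) (hF : ∀ P ∈ F, ¬ hasCopy A P) :
    upperDensity A ≤ avoidDensity F :=
  le_csSup ⟨1, by rintro _ ⟨A, -, rfl⟩; exact upperDensity_le_one A⟩ ⟨A, ⟨hA, hF⟩, rfl⟩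

lemma avoidDensity_nonneg (F : Set (Set (EuclideanSpace ℝ (Fin d)))) : 0 ≤ avoidDensity F :=
  Real.sSup_nonneg (by rintro _ ⟨A, -, rfl⟩; exact upperDensity_nonneg A)

lemma mRd_nonneg (P : Set (EuclideanSpace ℝ (Fin d))) : 0 ≤ mRd P :=
  Real.sSup_nonneg (by rintro _ ⟨A, -, rfl⟩; exact upperDensity_nonneg A)

lemma one_le_avoidDensity_empty : 1 ≤ avoidDensity (∅ : Set (Set (EuclideanSpace ℝ (Fin d)))) :=
  upperDensity_univ (d := d) ▸ upperDensity_le_avoidDensity MeasurableSet.univ (by simp)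

theorem mRd_mul_avoidDensity_le_avoidDensity_insert (hd : 0 < d)
    {Q : Set (EuclideanSpace ℝ (Fin d))} (hQ : Bornology.IsBounded Q)
    (F : Set (Set (EuclideanSpace ℝ (Fin d)))) :
    mRd Q * avoidDensity F ≤ avoidDensity (insert Q F) := by
  refine mul_le_of_forall_lt_of_nonneg (mRd_nonneg Q) (avoidDensity_nonneg _)
    fun β hβ hβQ α hα hαF => ?_
  obtain ⟨_, ⟨B, ⟨hB, hBQ⟩, rfl⟩, hβB⟩ := exists_lt_of_lt_sSup_of_nonneg hβ hβQ
  obtain ⟨_, ⟨A, ⟨hA, hAF⟩, rfl⟩, hαA⟩ := exists_lt_of_lt_sSup_of_nonneg hα hαF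
  refine le_of_forall_sub_le fun ε hε => ?_
  obtain ⟨C, hCA, hC, hCB, hCdens⟩ := exists_subset_hasCopy_imp_le_upperDensity hd hA hB hε
    (Metric.diam_nonneg (s := Q)) (frequently_exists_le_boxDensity_inter_preimage_sub hB hα hαA hβB)
  refine (mul_comm β α ▸ hCdens).trans (upperDensity_le_avoidDensity hC ?_)
  rintro P (rfl | hP)
  · exact fun h => hBQ (hCB P hQ le_rfl h)
  · exact fun h => hAF P hP (hasCopy_mono hCA h)

end AvoidDensity

/-- supermultiplicativity of the independence density in Euclidean space. -/
theorem stmt_4 {d n : ℕ} (hd : 0 < d)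
    (P : Fin n → Set (EuclideanSpace ℝ (Fin d))) (hPfin : ∀ i, (P i).Finite) :
    (∏ i, mRd (P i)) ≤
      sSup (upperDensity '' {A | MeasurableSet A ∧ ∀ i, ¬ hasCopy A (P i)}) := by
  have key (s : Finset (Fin n)) : ∏ i ∈ s, mRd (P i) ≤ avoidDensity (P '' s) := by
    induction s using Finset.induction_on with
    | empty => simpa using one_le_avoidDensity_empty
    | insert i s hi ih =>
      rw [Finset.prod_insert hi, Finset.coe_insert, Set.image_insert_eq]
      exact (mul_le_mul_of_nonneg_left ih (mRd_nonneg _)).trans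
        (mRd_mul_avoidDensity_le_avoidDensity_insert hd (hPfin i).isBounded _)
  simpa [avoidDensity] using key Finset.univ
end
end
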